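/- Let W' be the affine Weyl group of type B̃₂ with simple reflections r, s, t (rt = tr, (rs)⁴ = (st)⁴ = e). Then for every m ≥ 1, both r and t are in the left descent set and in the right descent set of the element w = rt(srt)^m; that is, l(rw) < l(w), l(tw) < l(w), l(wr) < l(w), and l(wt) < l(w). -/

import Mathlib

/-- The Coxeter matrix of affine type B̃₂ on generators `r = 0`, `s = 1`, `t = 2`,
with `m(r,t) = 2`, `m(r,s) = 4`, `m(s,t) = 4`. -/
def B2affMatrix : CoxeterMatrix (Fin 3) where
  M := !![1, 4, 2; 4, 1, 4; 2, 4, 1]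
  off_diagonal := by intro i i'; fin_cases i <;> fin_cases i' <;> simp

/-- The affine Weyl group of type B̃₂. -/
abbrev B2affGroup := B2affMatrix.Group

/-- The canonical Coxeter system on the affine Weyl group of type B̃₂. -/
def B2affCS : CoxeterSystem B2affMatrix B2affGroup := B2affMatrix.toCoxeterSystem

namespace B2aff

/-- The simple reflection `r`. -/
def r : B2affGroup := B2affCS.simple 0
/-- The simple reflection `s`. -/
def s : B2affGroup := B2affCS.simple 1
/-- The simple reflection `t`. -/
def t : B2affGroup := B2affCS.simple 2

end B2aff

/-! `B2affGroup` acts on `ℤ × ℤ` with `r`, `s`, `t` the reflections in the lines `x = 0`,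
`x = y`, `y = 3`; its reflecting lines are `x ∈ 3ℤ`, `y ∈ 3ℤ`, `x + y ∈ 6ℤ`, `x - y ∈ 6ℤ`, and
`(1, 2)` lies in the alcove cut out by the three mirrors. A simple reflection moves a point of
the orbit of `(1, 2)` across at most one reflecting line, so the number of lines separating
`w (1, 2)` from `(1, 2)` is at most `ℓ(w)`. For `w = rt(srt)^m` this number is `3m + 2`,
whereas `rw = t(srt)^m`, `tw = r(srt)^m`, `wr = (rts)^m t` and `wt = (rts)^m r` are products
of `3m + 1` simple reflections. -/

namespace CoxeterSystem

variable {B W : Type*} [Group W] {M : CoxeterMatrix B} (cs : CoxeterSystem M W)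

theorem le_length_of_forall_simple_mul_le (N : W → ℕ) (one : N 1 = 0)
    (simple_mul : ∀ i w, N (cs.simple i * w) ≤ N w + 1) (w : W) : N w ≤ cs.length w := by
  obtain ⟨ω, hω, rfl⟩ := cs.exists_isReduced w
  rw [hω.eq]
  clear hω
  induction ω with
  | nil => simp [one]
  | cons i ω ih => grw [cs.wordProd_cons, simple_mul, ih]; rfl

theorem length_pow_le (w : W) (n : ℕ) : cs.length (w ^ n) ≤ n * cs.length w := by
  induction n with
  | zero => simp
  | succ n ih => grw [pow_succ, cs.length_mul_le, ih, add_one_mul]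

end CoxeterSystem

namespace B2aff

def reflR : Equiv.Perm (ℤ × ℤ) :=
  Function.Involutive.toPerm (fun p => (-p.1, p.2)) fun p => by simp

def reflS : Equiv.Perm (ℤ × ℤ) := Equiv.prodComm ℤ ℤ

def reflT : Equiv.Perm (ℤ × ℤ) :=
  Function.Involutive.toPerm (fun p => (p.1, 6 - p.2)) fun p => by simp

@[simp] lemma reflR_apply (p : ℤ × ℤ) : reflR p = (-p.1, p.2) := rfl
@[simp] lemma reflS_apply (p : ℤ × ℤ) : reflS p = (p.2, p.1) := rfl
@[simp] lemma reflT_apply (p : ℤ × ℤ) : reflT p = (p.1, 6 - p.2) := rfl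

def reflection : Fin 3 → Equiv.Perm (ℤ × ℤ) := ![reflR, reflS, reflT]

theorem isLiftable_reflection : B2affMatrix.IsLiftable reflection := by
  intro i j
  ext p <;> fin_cases i <;> fin_cases j <;>
    simp [B2affMatrix, reflection, pow_succ, Equiv.Perm.mul_apply]


def toPerm : B2affGroup →* Equiv.Perm (ℤ × ℤ) := B2affCS.lift ⟨reflection, isLiftable_reflection⟩

@[simp] lemma toPerm_simple (i : Fin 3) : toPerm (B2affCS.simple i) = reflection i :=
  B2affCS.lift_apply_simple isLiftable_reflection i

@[simp] lemma toPerm_r : toPerm r = reflR := toPerm_simple 0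
@[simp] lemma toPerm_s : toPerm s = reflS := toPerm_simple 1
@[simp] lemma toPerm_t : toPerm t = reflT := toPerm_simple 2

def OffWalls (p : ℤ × ℤ) : Prop :=
  p.1 % 3 ≠ 0 ∧ p.2 % 3 ≠ 0 ∧ (p.1 + p.2) % 6 ≠ 0 ∧ (p.1 - p.2) % 6 ≠ 0

/-- For a point off the walls, `x / 3` (floor division) numbers the strip between consecutive
walls `x ∈ 3ℤ` containing it, and similarly for the other three families; the `+ 1` is because
`(1, 2)` lies in the strip `-6 < x - y < 0`. -/
def separatingWalls (p : ℤ × ℤ) : ℕ :=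
  (p.1 / 3).natAbs + (p.2 / 3).natAbs + ((p.1 + p.2) / 6).natAbs + ((p.1 - p.2) / 6 + 1).natAbs

lemma OffWalls.map_reflection {p : ℤ × ℤ} (hp : OffWalls p) (i : Fin 3) :
    OffWalls (reflection i p) := by
  obtain ⟨x, y⟩ := p
  obtain ⟨hx, hy, hxy, hyx⟩ := hp
  fin_cases i <;> simp only [OffWalls, B2aff.reflection] <;> simp <;> omega

lemma separatingWalls_reflection_le {p : ℤ × ℤ} (hp : OffWalls p) (i : Fin 3) :
    separatingWalls (reflection i p) ≤ separatingWalls p + 1 := by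
  obtain ⟨x, y⟩ := p
  obtain ⟨hx, hy, hxy, hyx⟩ := hp
  fin_cases i <;> simp only [separatingWalls, B2aff.reflection] <;> simp
  · rw [show -x / 3 = -(x / 3) - 1 by omega, show (-x + y) / 6 = -((x - y) / 6) - 1 by omega,
      show (-x - y) / 6 = -((x + y) / 6) - 1 by omega]
    omega
  · rw [show (y - x) / 6 = -((x - y) / 6) - 1 by omega, add_comm y x]
    omega
  · rw [show (6 - y) / 3 = 1 - y / 3 by omega, show (x + (6 - y)) / 6 = (x - y) / 6 + 1 by omega,
      show (x - (6 - y)) / 6 = (x + y) / 6 - 1 by omega]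
    omega

lemma offWalls_toPerm_apply (w : B2affGroup) : OffWalls (toPerm w (1, 2)) := by
  induction w using B2affCS.simple_induction_left with
  | one => simp [OffWalls]
  | mul_simple_left w i hw => simpa using hw.map_reflection i

lemma separatingWalls_toPerm_apply_le_length (w : B2affGroup) :
    separatingWalls (toPerm w (1, 2)) ≤ B2affCS.length w :=
  B2affCS.le_length_of_forall_simple_mul_le (fun w => separatingWalls (toPerm w (1, 2)))
    (by simp [separatingWalls])
    (fun i w => by simpa using separatingWalls_reflection_le (offWalls_toPerm_apply w) i) w

lemma toPerm_srt_apply (p : ℤ × ℤ) : toPerm (s * r * t) p = (6 - p.2, -p.1) := by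
  simp [Equiv.Perm.mul_apply]

lemma toPerm_srt_pow_two_mul_apply (k : ℕ) (p : ℤ × ℤ) :
    toPerm ((s * r * t) ^ (2 * k)) p = (p.1 + 6 * k, p.2 - 6 * k) := by
  induction k generalizing p with
  | zero => simp
  | succ k ih =>
    rw [mul_add_one, pow_add, map_mul, Equiv.Perm.mul_apply, ih, sq, map_mul,
      Equiv.Perm.mul_apply, toPerm_srt_apply, toPerm_srt_apply]
    ext <;> simp <;> ring

lemma separatingWalls_toPerm_rt_srt_pow (m : ℕ) :
    separatingWalls (toPerm (r * t * (s * r * t) ^ m) (1, 2)) = 3 * m + 2 := by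
  obtain ⟨k, rfl | rfl⟩ := Nat.even_or_odd' m
  · rw [map_mul, Equiv.Perm.mul_apply, toPerm_srt_pow_two_mul_apply]
    simp [separatingWalls]
    omega
  · rw [pow_succ, ← mul_assoc, map_mul, map_mul, Equiv.Perm.mul_apply, Equiv.Perm.mul_apply,
      toPerm_srt_apply, toPerm_srt_pow_two_mul_apply]
    simp [separatingWalls]
    omega

lemma le_length_rt_srt_pow (m : ℕ) : 3 * m + 2 ≤ B2affCS.length (r * t * (s * r * t) ^ m) :=
  separatingWalls_toPerm_rt_srt_pow m ▸ separatingWalls_toPerm_apply_le_length _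

lemma length_r : B2affCS.length r = 1 := B2affCS.length_simple 0

lemma length_t : B2affCS.length t = 1 := B2affCS.length_simple 2

lemma length_srt_le : B2affCS.length (s * r * t) ≤ 3 := by
  rw [show s * r * t = B2affCS.wordProd [1, 0, 2] by
    simp [CoxeterSystem.wordProd, mul_assoc, s, r, t]]
  exact B2affCS.length_wordProd_le _

lemma length_rts_le : B2affCS.length (r * t * s) ≤ 3 := by
  rw [show r * t * s = B2affCS.wordProd [0, 2, 1] by
    simp [CoxeterSystem.wordProd, mul_assoc, s, r, t]]
  exact B2affCS.length_wordProd_le _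

lemma r_mul_r : r * r = 1 := B2affCS.simple_mul_simple_self 0

lemma t_mul_t : t * t = 1 := B2affCS.simple_mul_simple_self 2

lemma r_mul_t_comm : r * t = t * r := by
  have h : (r * t) * (r * t) = 1 := by
    rw [← sq]
    exact B2affCS.simple_mul_simple_pow 0 2
  calc r * t = (r * t)⁻¹ := (inv_eq_of_mul_eq_one_right h).symm
    _ = t * r := by rw [mul_inv_rev, r, t, B2affCS.inv_simple, B2affCS.inv_simple]

lemma r_mul_rt : r * (r * t) = t := by rw [← mul_assoc, r_mul_r, one_mul]

lemma t_mul_rt : t * (r * t) = r := by rw [r_mul_t_comm, ← mul_assoc, t_mul_t, one_mul]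

lemma rt_mul_r : r * t * r = t := by rw [r_mul_t_comm, mul_assoc, r_mul_r, mul_one]

lemma rt_mul_t : r * t * t = r := by rw [mul_assoc, t_mul_t, mul_one]

lemma rt_srt_pow_eq (m : ℕ) : r * t * (s * r * t) ^ m = (r * t * s) ^ m * (r * t) := by
  rw [mul_assoc s, ← mul_pow_mul]

end B2aff

open B2aff in
theorem descents_rt_srt_pow_general (m : ℕ) :
    B2affCS.length (r * (r * t * (s * r * t) ^ m)) < B2affCS.length (r * t * (s * r * t) ^ m) ∧
    B2affCS.length (t * (r * t * (s * r * t) ^ m)) < B2affCS.length (r * t * (s * r * t) ^ m) ∧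
    B2affCS.length ((r * t * (s * r * t) ^ m) * r) < B2affCS.length (r * t * (s * r * t) ^ m) ∧
    B2affCS.length ((r * t * (s * r * t) ^ m) * t) < B2affCS.length (r * t * (s * r * t) ^ m) := by
  have hr_mul : r * (r * t * (s * r * t) ^ m) = t * (s * r * t) ^ m := by
    rw [← mul_assoc, r_mul_rt]
  have ht_mul : t * (r * t * (s * r * t) ^ m) = r * (s * r * t) ^ m := by
    rw [← mul_assoc, t_mul_rt]
  have hmul_r : r * t * (s * r * t) ^ m * r = (r * t * s) ^ m * t := by
    rw [rt_srt_pow_eq, mul_assoc, rt_mul_r]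
  have hmul_t : r * t * (s * r * t) ^ m * t = (r * t * s) ^ m * r := by
    rw [rt_srt_pow_eq, mul_assoc, rt_mul_t]
  have hw := le_length_rt_srt_pow m
  have hsrt := (B2affCS.length_pow_le _ m).trans (Nat.mul_le_mul_left m length_srt_le)
  have hrts := (B2affCS.length_pow_le _ m).trans (Nat.mul_le_mul_left m length_rts_le)
  refine ⟨?_, ?_, ?_, ?_⟩
  · grw [hr_mul, B2affCS.length_mul_le, hsrt, length_t]; omega
  · grw [ht_mul, B2affCS.length_mul_le, hsrt, length_r]; omega
  · grw [hmul_r, B2affCS.length_mul_le, hrts, length_t]; omega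
  · grw [hmul_t, B2affCS.length_mul_le, hrts, length_r]; omega

open B2aff in
/-- For every `m ≥ 1`, both `r` and `t` lie in the left and right descent sets of
`w = rt(srt)^m`: that is, `l(rw) < l(w)`, `l(tw) < l(w)`, `l(wr) < l(w)` and `l(wt) < l(w)`. -/
theorem descents_rt_srt_pow (m : ℕ) (hm : 1 ≤ m) :
    B2affCS.length (r * (r * t * (s * r * t) ^ m)) < B2affCS.length (r * t * (s * r * t) ^ m) ∧
    B2affCS.length (t * (r * t * (s * r * t) ^ m)) < B2affCS.length (r * t * (s * r * t) ^ m) ∧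
    B2affCS.length ((r * t * (s * r * t) ^ m) * r) < B2affCS.length (r * t * (s * r * t) ^ m) ∧
    B2affCS.length ((r * t * (s * r * t) ^ m) * t) < B2affCS.length (r * t * (s * r * t) ^ m) :=
  descents_rt_srt_pow_general m
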